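/- arXiv:1207.0416 — 2 statements merged into one kernel-verified Lean document; each statement's English description precedes it below -/
import Mathlib

section
/- There exists a constant C > 0 such that for all real t with 0 < t ≤ 1, the series Σ_{n=0}^∞ e^{−t √n} converges and |Σ_{n=0}^∞ e^{−t √n} − 2/t²| ≤ C/t. -/
/-!
The summand `x ↦ exp (-t √x)` is nonnegative and decreasing on `[0, ∞)`, so by the integral
test its sum over `ℕ` lies between `∫₀^∞ exp (-t √x) dx` and `1 + ∫₀^∞ exp (-t √x) dx`. The
substitution `x = u²` turns the integral into `2 ∫₀^∞ u e^{-tu} du = 2 Γ(2) / t² = 2 / t²`,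
and `1 ≤ 1 / t` for `t ≤ 1`, so `C = 1` works.
-/

open MeasureTheory Set Real

lemma AntitoneOn.abs_tsum_sub_integral_le {f : ℝ → ℝ} (anti : AntitoneOn f (Ici 0))
    (integrable : IntegrableOn f (Ioi 0)) (nonneg : ∀ x ∈ Ioi 0, 0 ≤ f x) :
    |∑' n : ℕ, f n - ∫ x in Ioi 0, f x| ≤ f 0 := by
  have summable := anti.summable_of_integrableOn_Ioi_zero integrable nonneg
  have f_zero_nonneg : 0 ≤ f 0 :=
    (nonneg 1 (mem_Ioi.2 one_pos)).trans (anti self_mem_Ici (mem_Ici.2 zero_le_one) zero_le_one)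
  rw [abs_le]
  constructor
  · linarith [anti.integral_le_tsum summable nonneg]
  · linarith [anti.tsum_le_integral integrable nonneg]

lemma antitone_exp_neg_mul_sqrt {t : ℝ} (ht : 0 ≤ t) :
    Antitone fun x : ℝ => exp (-t * √x) := fun _ _ hxy =>
  exp_le_exp.2 <| by nlinarith [sqrt_le_sqrt hxy]

lemma integral_exp_neg_mul_sqrt {t : ℝ} (ht : 0 < t) :
    ∫ x in Ioi (0 : ℝ), exp (-t * √x) = 2 / t ^ 2 := by
  simp_rw [sqrt_eq_rpow]
  rw [integral_exp_neg_mul_rpow one_half_pos ht,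
    show 1 / (1 / 2 : ℝ) + 1 = ((2 : ℕ) : ℝ) + 1 by norm_num, Gamma_nat_eq_factorial,
    show -1 / (1 / 2 : ℝ) = ((-2 : ℤ) : ℝ) by norm_num, rpow_intCast]
  simp [Nat.factorial, zpow_neg, div_eq_mul_inv, mul_comm]

/-- There is a constant C > 0 such that for 0 < t ≤ 1, Σ_{n≥0} e^{−t√n} converges
    and |Σ_{n≥0} e^{−t√n} − 2/t²| ≤ C/t. -/
theorem sqrt_face_amplitude :
    ∃ C : ℝ, 0 < C ∧ ∀ t : ℝ, 0 < t → t ≤ 1 →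
      Summable (fun n : ℕ => Real.exp (-t * Real.sqrt n)) ∧
        |(∑' n : ℕ, Real.exp (-t * Real.sqrt n)) - 2 / t ^ 2| ≤ C / t := by
  refine ⟨1, one_pos, fun t ht ht1 => ?_⟩
  have anti := (antitone_exp_neg_mul_sqrt ht.le).antitoneOn (Ici 0)
  have nonneg : ∀ x ∈ Ioi (0 : ℝ), 0 ≤ exp (-t * √x) := fun _ _ => (exp_pos _).le
  have integral_eq := integral_exp_neg_mul_sqrt ht
  -- a non-integrable function would have integral `0`
  have integrable : IntegrableOn (fun x : ℝ => exp (-t * √x)) (Ioi 0) :=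
    Integrable.of_integral_ne_zero (by rw [integral_eq]; positivity)
  refine ⟨anti.summable_of_integrableOn_Ioi_zero integrable nonneg, ?_⟩
  calc |∑' n : ℕ, exp (-t * √n) - 2 / t ^ 2|
      ≤ exp (-t * √0) := integral_eq ▸ anti.abs_tsum_sub_integral_le integrable nonneg
    _ = 1 := by simp
    _ ≤ 1 / t := by rw [le_div_iff₀ ht]; linarith
end

section
/- The limit as t → 0⁺ of t · Σ_{(q₁,q₂) ∈ ℕ×ℕ} e^{−t(q₁² + q₂²)} exists and equals π/4. -/
/-!
The double sum factorises as `θ(t)²` with `θ(t) = ∑ₙ e^{-tn²}`. Since `x ↦ e^{-tx²}` is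
decreasing on `[0, ∞)`, the integral test squeezes `θ(t)` between `∫₀^∞ e^{-tx²} dx = √(π/t)/2`
and `1 + √(π/t)/2`, so `√t · θ(t) → √π/2` and `t · θ(t)² → π/4`.
-/

open Filter Real MeasureTheory Set Topology

noncomputable def natGaussianSum (t : ℝ) : ℝ := ∑' n : ℕ, exp (-t * (n : ℝ) ^ 2)

lemma antitoneOn_exp_neg_mul_sq {t : ℝ} (ht : 0 ≤ t) :
    AntitoneOn (fun x : ℝ => exp (-t * x ^ 2)) (Ici 0) := by
  intro x hx y _ hxy
  simp only [exp_le_exp, neg_mul, neg_le_neg_iff]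
  gcongr

lemma integrableOn_exp_neg_mul_sq_Ioi {t : ℝ} (ht : 0 < t) :
    IntegrableOn (fun x : ℝ => exp (-t * x ^ 2)) (Ioi 0) :=
  (integrable_exp_neg_mul_sq ht).integrableOn

lemma summable_exp_neg_mul_natCast_sq {t : ℝ} (ht : 0 < t) :
    Summable (fun n : ℕ => exp (-t * (n : ℝ) ^ 2)) :=
  (antitoneOn_exp_neg_mul_sq ht.le).summable_of_integrableOn_Ioi_zero
    (integrableOn_exp_neg_mul_sq_Ioi ht) fun _ _ => (exp_pos _).le

lemma sqrt_pi_div_two_div_le_natGaussianSum {t : ℝ} (ht : 0 < t) :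
    √(π / t) / 2 ≤ natGaussianSum t := by
  rw [← integral_gaussian_Ioi]
  exact (antitoneOn_exp_neg_mul_sq ht.le).integral_le_tsum
    (summable_exp_neg_mul_natCast_sq ht) fun _ _ => (exp_pos _).le

lemma natGaussianSum_le {t : ℝ} (ht : 0 < t) :
    natGaussianSum t ≤ 1 + √(π / t) / 2 := by
  calc natGaussianSum t ≤ exp (-t * 0 ^ 2) + ∫ x in Ioi 0, exp (-t * x ^ 2) :=
        (antitoneOn_exp_neg_mul_sq ht.le).tsum_le_integral
          (integrableOn_exp_neg_mul_sq_Ioi ht) fun _ _ => (exp_pos _).le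
    _ = 1 + √(π / t) / 2 := by rw [integral_gaussian_Ioi]; norm_num

lemma tsum_exp_neg_mul_sum_sq_eq_sq {t : ℝ} (ht : 0 < t) :
    ∑' q : ℕ × ℕ, exp (-t * ((q.1 : ℝ) ^ 2 + (q.2 : ℝ) ^ 2)) = natGaussianSum t ^ 2 := by
  have hs := summable_exp_neg_mul_natCast_sq ht
  have hs' : Summable fun n : ℕ => ‖exp (-t * (n : ℝ) ^ 2)‖ := by
    simpa only [norm_of_nonneg (exp_pos _).le] using hs
  rw [natGaussianSum, sq, tsum_mul_tsum_of_summable_norm hs' hs']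
  simp only [mul_add, exp_add]

lemma tendsto_sqrt_mul_natGaussianSum :
    Tendsto (fun t => √t * natGaussianSum t) (𝓝[>] 0) (𝓝 (√π / 2)) := by
  have hsqrt : Tendsto (fun t : ℝ => √π / 2 + √t) (𝓝[>] 0) (𝓝 (√π / 2)) := by
    simpa using ((continuous_sqrt.tendsto 0).const_add (√π / 2)).mono_left nhdsWithin_le_nhds
  refine tendsto_of_tendsto_of_tendsto_of_le_of_le' tendsto_const_nhds hsqrt ?_ ?_ <;>
    filter_upwards [self_mem_nhdsWithin] with t (ht : 0 < t)
  all_goals have hprod : √t * √(π / t) = √π := by rw [← sqrt_mul ht.le, mul_div_cancel₀ _ ht.ne']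
  · calc √π / 2 = √t * (√(π / t) / 2) := by rw [← hprod]; ring
      _ ≤ √t * natGaussianSum t := by gcongr; exact sqrt_pi_div_two_div_le_natGaussianSum ht
  · calc √t * natGaussianSum t ≤ √t * (1 + √(π / t) / 2) := by gcongr; exact natGaussianSum_le ht
      _ = √π / 2 + √t := by rw [← hprod]; ring

/-- t · Σ_{(q₁,q₂)∈ℕ²} e^{−t(q₁²+q₂²)} tends to π/4 as t → 0⁺. -/
theorem gaussian_pair_face_amplitude :
    Tendsto
      (fun t : ℝ => t * ∑' q : ℕ × ℕ, Real.exp (-t * ((q.1 : ℝ) ^ 2 + (q.2 : ℝ) ^ 2)))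
      (nhdsWithin 0 (Set.Ioi 0)) (nhds (Real.pi / 4)) := by
  have hlim : Tendsto (fun t => (√t * natGaussianSum t) ^ 2) (𝓝[>] 0) (𝓝 (π / 4)) := by
    convert tendsto_sqrt_mul_natGaussianSum.pow 2 using 2
    rw [div_pow, sq_sqrt pi_pos.le]
    norm_num
  refine hlim.congr' ?_
  filter_upwards [self_mem_nhdsWithin] with t (ht : 0 < t)
  rw [tsum_exp_neg_mul_sum_sq_eq_sq ht, mul_pow, sq_sqrt ht.le]
end
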